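/- arXiv:0810.5246 — 2 statements merged into one kernel-verified Lean document; each statement's English description precedes it below -/
import Mathlib

section
/- With $\Pi_N$ as above, for every $u \in BV(\mathbb{R};\mathbb{R}^n)$ the total variation of $\Pi_N u$ satisfies $\mathrm{TV}(\Pi_N u) \leq 2\,\mathrm{TV}(u)$. -/
/-!
`Π_N u` is a step function: on the cell `(k/N, (k+1)/N]` it equals the mean `c k` of `u` over that
cell for the indices `a ≤ k ≤ b`, and it vanishes elsewhere. Its variation is therefore at most
`‖c a‖ + ∑ ‖c (k+1) - c k‖ + ‖c b‖`. Each jump `c (k+1) - c k` is the mean over `t ∈ (0, 1/N]`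
of `u (t + (k+1)/N) - u (t + k/N)`, and for fixed `t` these increments along the grid `t + ℤ/N`
add up to at most `TV(u)`, so the interior jumps contribute at most `TV(u)`. An integrable `u` is
arbitrarily small somewhere on every half-line, so `‖c a‖` is bounded by the variation of `u` on
`(-∞, (a+1)/N]` and `‖c b‖` by its variation on `(b/N, ∞)`; these half-lines are disjoint, which
gives the second `TV(u)`.
-/

open MeasureTheory Set

/-- The averaging operator `Π_N`. -/
noncomputable def PiN (n N : ℕ) (u : ℝ → EuclideanSpace ℝ (Fin n)) :
    ℝ → EuclideanSpace ℝ (Fin n) :=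
  fun x => ∑ k ∈ (Finset.Icc (-1 - (N : ℤ) ^ 2) (-1 + (N : ℤ) ^ 2) : Finset ℤ),
    Set.indicator (Set.Ioc ((k : ℝ) / N) (((k : ℝ) + 1) / N))
      (fun _ => (N : ℝ) • ∫ ξ in ((k : ℝ) / N)..(((k : ℝ) + 1) / N), u ξ) x

open scoped ENNReal

lemma eVariationOn_le_sum_edist_of_constant_outside {E : Type*} [PseudoEMetricSpace E] (w : ℤ → E)
    (a : ℤ) (m : ℕ) (hlo : ∀ k ≤ a, w k = w a) (hhi : ∀ k, a + m ≤ k → w k = w (a + m)) :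
    eVariationOn w univ ≤ ∑ i ∈ Finset.range m, edist (w (a + i)) (w (a + i + 1)) := by
  let clamp : ℤ → ℕ := fun k => min (k - a).toNat m
  have hclamp : Monotone clamp := fun k l hkl => min_le_min_right _ (Int.toNat_le_toNat (by omega))
  have hw : ∀ k, w k = w (a + clamp k) := by
    intro k
    have hclamp_eq : ((clamp k : ℕ) : ℤ) = min (max (k - a) 0) m := by simp [clamp]
    rcases le_total k a with hk | hk
    · rw [hlo k hk, show a + clamp k = a by omega]
    rcases le_total (a + m) k with hk' | hk'
    · rw [hhi k hk', show a + clamp k = a + m by omega]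
    · rw [show a + clamp k = k by omega]
  calc eVariationOn w univ
      = eVariationOn ((fun i : ℕ => w (a + i)) ∘ clamp) univ :=
        eVariationOn.eq_of_eqOn fun k _ => hw k
    _ ≤ eVariationOn (fun i : ℕ => w (a + i)) (id '' Iic m) := by
        rw [image_id]
        exact eVariationOn.comp_le_of_monotoneOn _ _ (hclamp.monotoneOn _)
          fun k _ => min_le_right (α := ℕ) _ _
    _ = _ := by
        rw [eVariationOn.image_range_of_monotone _ monotone_id]
        simp only [id, Nat.cast_add, Nat.cast_one, add_assoc]

lemma eVariationOn_indicator_Icc_le {E : Type*} [SeminormedAddGroup E] (c : ℤ → E)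
    (a : ℤ) (m : ℕ) :
    eVariationOn ((Icc a (a + m)).indicator c) univ ≤
      ‖c a‖ₑ + ∑ i ∈ Finset.range m, edist (c (a + i)) (c (a + i + 1)) + ‖c (a + m)‖ₑ := by
  set w := (Icc a (a + m)).indicator c
  have hw_out : ∀ k, k < a ∨ a + m < k → w k = 0 := fun k hk =>
    indicator_of_notMem (by simp only [mem_Icc]; omega) _
  have hw_in : ∀ k, a ≤ k → k ≤ a + m → w k = c k := fun k hk hk' =>
    indicator_of_mem (by simp only [mem_Icc]; omega) _
  refine (eVariationOn_le_sum_edist_of_constant_outside w (a - 1) (m + 2) ?_ ?_).trans (le_of_eq ?_)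
  · intro k hk
    rw [hw_out k (by omega), hw_out (a - 1) (by omega)]
  · intro k hk
    rw [hw_out k (by omega), hw_out _ (by omega)]
  · rw [Finset.sum_range_succ, Finset.sum_range_succ']
    have hsum : ∀ i ∈ Finset.range m, edist (w (a - 1 + ↑(i + 1))) (w (a - 1 + ↑(i + 1) + 1)) =
        edist (c (a + i)) (c (a + i + 1)) := fun i hi => by
      rw [Finset.mem_range] at hi
      rw [hw_in _ (by omega) (by omega), hw_in _ (by omega) (by omega)]
      congr 2 <;> push_cast <;> ring
    rw [Finset.sum_congr rfl hsum, hw_out (a - 1 + ((0 : ℕ) : ℤ)) (by omega),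
      hw_in _ (by omega) (by omega), hw_in _ (by omega) (by omega),
      hw_out (a - 1 + ((m + 1 : ℕ) : ℤ) + 1) (by omega), edist_comm, edist_zero_right,
      edist_zero_right,
      show a - 1 + ((0 : ℕ) : ℤ) + 1 = a by omega, show a - 1 + ((m + 1 : ℕ) : ℤ) = a + m by omega,
      add_comm _ ‖c a‖ₑ]

section CellMean

variable {E : Type*} [NormedAddCommGroup E]

lemma enorm_le_eVariationOn_of_volume_eq_top {u : ℝ → E} (hu : Integrable u) {s : Set ℝ}
    (hs : volume s = ⊤) {x : ℝ} (hx : x ∈ s) : ‖u x‖ₑ ≤ eVariationOn u s := by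
  refine ENNReal.le_of_forall_pos_le_add fun ε hε _ => ?_
  -- `u` is small somewhere on `s`, since `{ε ≤ ‖u‖}` has finite measure
  obtain ⟨y, hy, hyε⟩ : ∃ y ∈ s, ‖u y‖₊ < ε := by
    by_contra! h
    have := hs ▸ measure_mono (μ := volume) (fun y hy => h y hy : s ⊆ {y | (ε : ℝ) ≤ ‖u y‖})
    exact (hu.measure_norm_ge_lt_top (NNReal.coe_pos.2 hε)).ne (top_le_iff.1 this)
  calc ‖u x‖ₑ ≤ ‖u x - u y‖ₑ + ‖u y‖ₑ := by simpa using enorm_add_le (u x - u y) (u y)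
    _ ≤ eVariationOn u s + ε := by
        gcongr
        · rw [← edist_eq_enorm_sub]
          exact eVariationOn.edist_le u hx hy
        · rw [enorm_eq_nnnorm]
          exact_mod_cast hyε.le

variable [NormedSpace ℝ E]

noncomputable def cellMean (N : ℝ) (u : ℝ → E) (k : ℤ) : E :=
  N • ∫ ξ in (k : ℝ) / N..((k : ℝ) + 1) / N, u ξ

lemma cellMean_eq_smul_integral_shift (N : ℝ) (u : ℝ → E) (k : ℤ) :
    cellMean N u k = N • ∫ t in (0 : ℝ)..1 / N, u (t + k / N) := by
  rw [cellMean, intervalIntegral.integral_comp_add_right, zero_add, ← add_div, add_comm 1]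

lemma enorm_smul_intervalIntegral_le {N : ℝ} (hN : 0 ≤ N) (g : ℝ → E) :
    ‖N • ∫ t in (0 : ℝ)..1 / N, g t‖ₑ ≤ ENNReal.ofReal N * ∫⁻ t in Ioc 0 (1 / N), ‖g t‖ₑ := by
  rw [enorm_smul, Real.enorm_of_nonneg hN, intervalIntegral.integral_of_le (by positivity)]
  gcongr
  exact enorm_integral_le_lintegral_enorm _

lemma ofReal_mul_setLIntegral_Ioc_le {N : ℝ} (hN : 0 < N) {g : ℝ → ℝ≥0∞} {C : ℝ≥0∞}
    (hg : ∀ t ∈ Ioc 0 (1 / N), g t ≤ C) :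
    ENNReal.ofReal N * ∫⁻ t in Ioc 0 (1 / N), g t ≤ C := by
  calc ENNReal.ofReal N * ∫⁻ t in Ioc 0 (1 / N), g t
      ≤ ENNReal.ofReal N * ∫⁻ _ in Ioc 0 (1 / N), C := by
        gcongr ENNReal.ofReal N * ?_
        exact setLIntegral_mono' measurableSet_Ioc hg
    _ = C := by
        rw [setLIntegral_const, Real.volume_Ioc, sub_zero, mul_comm C, ← mul_assoc,
          ← ENNReal.ofReal_mul hN.le, mul_one_div_cancel hN.ne', ENNReal.ofReal_one, one_mul]

lemma edist_cellMean_succ_le {N : ℝ} (hN : 0 ≤ N) {u : ℝ → E} (hu : Integrable u) (k : ℤ) :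
    edist (cellMean N u k) (cellMean N u (k + 1)) ≤
      ENNReal.ofReal N *
        ∫⁻ t in Ioc 0 (1 / N), edist (u (t + (k + 1 : ℤ) / N)) (u (t + k / N)) := by
  rw [edist_comm, edist_eq_enorm_sub, cellMean_eq_smul_integral_shift,
    cellMean_eq_smul_integral_shift, ← smul_sub, ← intervalIntegral.integral_sub
      (hu.comp_add_right _).intervalIntegrable (hu.comp_add_right _).intervalIntegrable]
  simp only [edist_eq_enorm_sub]
  exact enorm_smul_intervalIntegral_le hN _

lemma sum_edist_cellMean_le {N : ℝ} (hN : 0 < N) {u : ℝ → E} (hu : Integrable u) (a : ℤ) (m : ℕ) :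
    ∑ i ∈ Finset.range m, edist (cellMean N u (a + i)) (cellMean N u (a + i + 1)) ≤
      eVariationOn u univ := by
  have hmeas : ∀ i ∈ Finset.range m, AEMeasurable
      (fun t => edist (u (t + (a + i + 1 : ℤ) / N)) (u (t + (a + i : ℤ) / N)))
      (volume.restrict (Ioc 0 (1 / N))) := fun i _ => by
    simp only [edist_eq_enorm_sub]
    exact ((hu.comp_add_right _).sub (hu.comp_add_right _)).aestronglyMeasurable.enorm.restrict
  have hpointwise : ∀ t, ∑ i ∈ Finset.range m,
      edist (u (t + (a + i + 1 : ℤ) / N)) (u (t + (a + i : ℤ) / N)) ≤ eVariationOn u univ := by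
    intro t
    have hmono : Monotone fun i : ℕ => t + (a + i : ℤ) / N := fun i j hij =>
      add_le_add_right (div_le_div_of_nonneg_right (Int.cast_le.2 (by omega)) hN.le) t
    simpa only [Nat.cast_succ, add_assoc] using
      eVariationOn.sum_le (f := u) (n := m) hmono fun _ => mem_univ _
  calc ∑ i ∈ Finset.range m, edist (cellMean N u (a + i)) (cellMean N u (a + i + 1))
      ≤ ∑ i ∈ Finset.range m, ENNReal.ofReal N * ∫⁻ t in Ioc 0 (1 / N),
          edist (u (t + (a + i + 1 : ℤ) / N)) (u (t + (a + i : ℤ) / N)) :=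
        Finset.sum_le_sum fun i _ => edist_cellMean_succ_le hN.le hu _
    _ = ENNReal.ofReal N * ∫⁻ t in Ioc 0 (1 / N), ∑ i ∈ Finset.range m,
          edist (u (t + (a + i + 1 : ℤ) / N)) (u (t + (a + i : ℤ) / N)) := by
        rw [lintegral_finsetSum' _ hmeas, Finset.mul_sum]
    _ ≤ eVariationOn u univ := ofReal_mul_setLIntegral_Ioc_le hN fun t _ => hpointwise t

lemma enorm_cellMean_le {N : ℝ} (hN : 0 < N) {u : ℝ → E} (hu : Integrable u) {k : ℤ} {s : Set ℝ}
    (hs : volume s = ⊤) (hks : Ioc (k / N) ((k + 1) / N) ⊆ s) :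
    ‖cellMean N u k‖ₑ ≤ eVariationOn u s := by
  rw [cellMean_eq_smul_integral_shift]
  refine (enorm_smul_intervalIntegral_le hN.le _).trans
    (ofReal_mul_setLIntegral_Ioc_le hN fun t ht => enorm_le_eVariationOn_of_volume_eq_top hu hs ?_)
  apply hks
  constructor
  · linarith [ht.1]
  · rw [add_div]; linarith [ht.2]

end CellMean

lemma mem_Ioc_div_iff_ceil_eq {N : ℝ} (hN : 0 < N) {k : ℤ} {x : ℝ} :
    x ∈ Ioc (k / N) ((k + 1) / N) ↔ ⌈N * x⌉ = k + 1 := by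
  rw [Int.ceil_eq_iff, mem_Ioc, div_lt_iff₀ hN, le_div_iff₀ hN]
  push_cast
  constructor <;> rintro ⟨h₁, h₂⟩ <;> constructor <;> linarith

lemma PiN_eq_indicator_comp_ceil {n N : ℕ} (hN : 1 ≤ N) (u : ℝ → EuclideanSpace ℝ (Fin n)) :
    PiN n N u = (Icc (-1 - (N : ℤ) ^ 2) (-1 + (N : ℤ) ^ 2)).indicator (cellMean N u) ∘
      fun x => ⌈(N : ℝ) * x⌉ - 1 := by
  classical
  have hN₀ : (0 : ℝ) < N := by exact_mod_cast hN
  funext x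
  have hcell : ∀ k : ℤ,
      (Ioc ((k : ℝ) / N) (((k : ℝ) + 1) / N)).indicator (fun _ => cellMean N u k) x =
        if ⌈(N : ℝ) * x⌉ - 1 = k then cellMean N u k else 0 := fun k => by
    rw [indicator_apply]
    exact if_congr ((mem_Ioc_div_iff_ceil_eq hN₀).trans sub_eq_iff_eq_add.symm) rfl rfl
  change ∑ k ∈ (Finset.Icc (-1 - (N : ℤ) ^ 2) (-1 + (N : ℤ) ^ 2) : Finset ℤ),
    (Ioc ((k : ℝ) / N) (((k : ℝ) + 1) / N)).indicator (fun _ => cellMean N u k) x = _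
  rw [Finset.sum_congr rfl fun k _ => hcell k, Finset.sum_ite_eq, Function.comp_apply,
    indicator_apply]
  exact if_congr Finset.mem_Icc rfl rfl

theorem stmt1_general (n N : ℕ) (hN : 1 ≤ N) (u : ℝ → EuclideanSpace ℝ (Fin n))
    (hu : Integrable u) :
    eVariationOn (PiN n N u) Set.univ ≤ 2 * eVariationOn u Set.univ := by
  have hN₀ : (0 : ℝ) < N := by exact_mod_cast hN
  set a : ℤ := -1 - (N : ℤ) ^ 2
  set m : ℕ := 2 * N ^ 2
  have hb : -1 + (N : ℤ) ^ 2 = a + m := by push_cast [a, m]; ring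
  have hcells : ((a : ℝ) + 1) / N ≤ ((a + m : ℤ) : ℝ) / N := by
    gcongr
    have hm : 1 ≤ m := Nat.one_le_iff_ne_zero.2 (by positivity)
    exact_mod_cast (by omega : a + 1 ≤ a + m)
  set V := eVariationOn u univ
  calc eVariationOn (PiN n N u) univ
      ≤ eVariationOn ((Icc a (a + m)).indicator (cellMean N u)) univ := by
        rw [PiN_eq_indicator_comp_ceil hN, hb]
        refine eVariationOn.comp_le_of_monotoneOn _ _ (fun x _ y _ hxy => ?_) (mapsTo_univ _ _)
        gcongr
    _ ≤ ‖cellMean N u a‖ₑ + V + ‖cellMean N u (a + m)‖ₑ := by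
        grw [eVariationOn_indicator_Icc_le, sum_edist_cellMean_le hN₀ hu]
    _ ≤ eVariationOn u (Iic (((a : ℝ) + 1) / N)) + V +
          eVariationOn u (Ioi (((a + m : ℤ) : ℝ) / N)) := by
        gcongr
        · exact enorm_cellMean_le hN₀ hu Real.volume_Iic Ioc_subset_Iic_self
        · exact enorm_cellMean_le hN₀ hu Real.volume_Ioi fun x hx => hx.1
    _ ≤ V + V := by
        rw [add_right_comm]
        gcongr
        refine (eVariationOn.add_le_union u fun x hx y hy => ?_).trans
          (eVariationOn.mono u (subset_univ _))
        exact (mem_Iic.1 hx).trans (hcells.trans (mem_Ioi.1 hy).le)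
    _ = 2 * V := (two_mul V).symm

/-- For every `u` of bounded variation, `TV(Π_N u) ≤ 2 TV(u)`. -/
theorem stmt1 (n N : ℕ) (hN : 1 ≤ N) (u : ℝ → EuclideanSpace ℝ (Fin n))
    (hu : Integrable u) (hBV : eVariationOn u Set.univ ≠ ⊤) :
    eVariationOn (PiN n N u) Set.univ ≤ 2 * eVariationOn u Set.univ :=
  stmt1_general n N hN u hu
end

section
/- Let $u^\epsilon \to u$ in $L^1_{loc}([0,T]\times\mathbb{R};\mathbb{R}^n)$ and suppose the uniform trace estimate $\int_0^T \|u^\epsilon(t,\Gamma(t)) - u^\epsilon(t,\Gamma(t)+x)\|\,dt \leq Kx$ and $\int_0^T \|u(t,\Gamma(t)+x) - u(t,\Gamma(t))\|\,dt \leq Kx$ hold for all small $x > 0$ and all $\epsilon$, with $K$ independent of $\epsilon$ and $x$. Then $u^\epsilon(\cdot,\Gamma(\cdot)) \to u(\cdot,\Gamma(\cdot))$ in $L^1([0,T];\mathbb{R}^n)$. -/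
open MeasureTheory Set Filter
open scoped ENNReal Topology

/-!
For `0 < x ≤ δ` the triangle inequality bounds the `L¹` distance of the traces along `Γ` by
`2Kx` plus the `L¹` distance of the traces along `Γ + x`. Instead of extracting a subsequence
that converges along almost every shifted curve, average this bound over `x ∈ (0, δ]`: by
Tonelli, the averaged shifted term is at most `1/δ` times the `L¹` distance of `uν` and `u` on
the compact set `[0, T] × [min Γ, max Γ + x₀]`, which tends to `0`. Hence the `limsup` of the
trace distances is at most `2Kδ` for every small `δ > 0`.
-/

theorem lintegral_edist_le_add_add {α E : Type*} [MeasurableSpace α] [PseudoEMetricSpace E]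
    {μ : Measure α} {f f' g' g : α → E}
    (hf'g' : AEMeasurable (fun a => edist (f' a) (g' a)) μ)
    (hg'g : AEMeasurable (fun a => edist (g' a) (g a)) μ) :
    ∫⁻ a, edist (f a) (g a) ∂μ ≤
      ∫⁻ a, edist (f a) (f' a) ∂μ + ∫⁻ a, edist (f' a) (g' a) ∂μ + ∫⁻ a, edist (g' a) (g a) ∂μ := by
  rw [← lintegral_add_right' _ hf'g', ← lintegral_add_right' _ hg'g]
  exact lintegral_mono fun a => edist_triangle4 _ _ _ _

theorem setLIntegral_Ioc_comp_add_left (F : ℝ → ℝ≥0∞) (a δ : ℝ) :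
    ∫⁻ x in Ioc 0 δ, F (a + x) = ∫⁻ y in Ioc a (a + δ), F y := by
  have hpre : (a + ·) ⁻¹' Ioc a (a + δ) = Ioc 0 δ := by
    ext x; simp
  rw [← hpre]
  exact (measurePreserving_add_left volume a).setLIntegral_comp_preimage_emb
    (measurableEmbedding_addLeft a) _ _

theorem lintegral_Ioc_setLIntegral_shift_le {F : ℝ × ℝ → ℝ≥0∞} (hF : Measurable F)
    {Γ : ℝ → ℝ} (hΓ : Measurable Γ) {s : Set ℝ} {m M : ℝ} (hΓs : MapsTo Γ s (Icc m M))
    (δ : ℝ) :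
    ∫⁻ x in Ioc 0 δ, ∫⁻ t in s, F (t, Γ t + x) ≤ ∫⁻ p in s ×ˢ Icc m (M + δ), F p := by
  have hshift : Measurable (Function.uncurry fun x t => F (t, Γ t + x)) := by
    unfold Function.uncurry; fun_prop
  rw [lintegral_lintegral_swap hshift.aemeasurable,
    Measure.volume_eq_prod, ← Measure.prod_restrict, lintegral_prod _ hF.aemeasurable]
  refine setLIntegral_mono (hF.lintegral_prod_right') fun t ht => ?_
  rw [setLIntegral_Ioc_comp_add_left (fun y => F (t, y))]
  exact lintegral_mono_set fun y hy =>
    ⟨(hΓs ht).1.trans hy.1.le, hy.2.trans (by linarith [(hΓs ht).2])⟩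

theorem le_add_div_of_le_add_of_setLIntegral_le {L I c : ℝ≥0∞} {G : ℝ → ℝ≥0∞} {δ : ℝ}
    (hδ : 0 < δ) (hL : ∀ x ∈ Ioc 0 δ, L ≤ c * ENNReal.ofReal x + G x)
    (hG : ∫⁻ x in Ioc 0 δ, G x ≤ I) :
    L ≤ c * ENNReal.ofReal δ + I / ENNReal.ofReal δ := by
  have hδ0 : ENNReal.ofReal δ ≠ 0 := (ENNReal.ofReal_pos.2 hδ).ne'
  rw [← ENNReal.mul_le_mul_iff_right hδ0 ENNReal.ofReal_ne_top, mul_add,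
    ENNReal.mul_div_cancel hδ0 ENNReal.ofReal_ne_top]
  calc ENNReal.ofReal δ * L = ∫⁻ _ in Ioc 0 δ, L := by
        rw [setLIntegral_const, Real.volume_Ioc, sub_zero, mul_comm]
    _ ≤ ∫⁻ x in Ioc 0 δ, c * ENNReal.ofReal δ + G x :=
        setLIntegral_mono' measurableSet_Ioc fun x hx =>
          (hL x hx).trans (by gcongr; exact hx.2)
    _ = ENNReal.ofReal δ * (c * ENNReal.ofReal δ) + ∫⁻ x in Ioc 0 δ, G x := by
        rw [lintegral_add_left measurable_const, setLIntegral_const, Real.volume_Ioc, sub_zero,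
          mul_comm]
    _ ≤ ENNReal.ofReal δ * (c * ENNReal.ofReal δ) + I := by gcongr

theorem tendsto_zero_of_le_add_of_setLIntegral_le {L I : ℕ → ℝ≥0∞} {G : ℕ → ℝ → ℝ≥0∞}
    {c : ℝ≥0∞} (hc : c ≠ ∞) {x₀ : ℝ} (hx₀ : 0 < x₀) (hI : Tendsto I atTop (𝓝 0))
    (hL : ∀ ν, ∀ x ∈ Ioc 0 x₀, L ν ≤ c * ENNReal.ofReal x + G ν x)
    (hG : ∀ ν, ∀ δ ∈ Ioc 0 x₀, ∫⁻ x in Ioc 0 δ, G ν x ≤ I ν) :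
    Tendsto L atTop (𝓝 0) := by
  have hlimsup : ∀ δ ∈ Ioc 0 x₀, limsup L atTop ≤ c * ENNReal.ofReal δ := fun δ hδ =>
    calc limsup L atTop
        ≤ limsup (fun ν => c * ENNReal.ofReal δ + I ν / ENNReal.ofReal δ) atTop :=
          limsup_le_limsup <| .of_forall fun ν =>
            le_add_div_of_le_add_of_setLIntegral_le hδ.1
              (fun x hx => hL ν x ⟨hx.1, hx.2.trans hδ.2⟩) (hG ν δ hδ)
      _ = c * ENNReal.ofReal δ := by
          simpa using ((ENNReal.Tendsto.div_const hI
            (.inr (ENNReal.ofReal_pos.2 hδ.1).ne')).const_add (c * ENNReal.ofReal δ)).limsup_eq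
  have hc0 : Tendsto (fun δ => c * ENNReal.ofReal δ) (𝓝[>] 0) (𝓝 0) := by
    simpa using ENNReal.Tendsto.const_mul
      ((ENNReal.continuous_ofReal.tendsto 0).mono_left nhdsWithin_le_nhds) (.inr hc)
  refine tendsto_of_le_liminf_of_limsup_le zero_le (ge_of_tendsto hc0 ?_)
  filter_upwards [Ioc_mem_nhdsGT hx₀] with δ hδ using hlimsup δ hδ

theorem stmt17_general (n : ℕ) (T K : ℝ)
    (uν : ℕ → ℝ → ℝ → EuclideanSpace ℝ (Fin n))
    (u : ℝ → ℝ → EuclideanSpace ℝ (Fin n)) (Γ : ℝ → ℝ)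
    (hΓ : Continuous Γ)
    (hmeasν : ∀ ν, Measurable (Function.uncurry (uν ν)))
    (hmeas : Measurable (Function.uncurry u))
    (hconv : ∀ Kset : Set (ℝ × ℝ), IsCompact Kset →
      Tendsto (fun ν => ∫⁻ p in Kset, ‖uν ν p.1 p.2 - u p.1 p.2‖₊) atTop (nhds 0))
    (x₀ : ℝ) (hx₀ : 0 < x₀)
    (htraceν : ∀ ν, ∀ x ∈ Set.Ioc (0 : ℝ) x₀,
      (∫⁻ t in Set.Icc 0 T, ‖uν ν t (Γ t) - uν ν t (Γ t + x)‖₊) ≤ ENNReal.ofReal (K * x))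
    (htrace : ∀ x ∈ Set.Ioc (0 : ℝ) x₀,
      (∫⁻ t in Set.Icc 0 T, ‖u t (Γ t + x) - u t (Γ t)‖₊) ≤ ENNReal.ofReal (K * x)) :
    Tendsto (fun ν => ∫⁻ t in Set.Icc 0 T, ‖uν ν t (Γ t) - u t (Γ t)‖₊) atTop (nhds 0) := by
  simp only [← enorm_eq_nnnorm, ← edist_eq_enorm_sub] at *
  obtain ⟨m, M, hΓIcc⟩ : ∃ m M, MapsTo Γ (Icc 0 T) (Icc m M) :=
    ⟨_, _, mapsTo_iff_image_subset.2 (isCompact_Icc.image hΓ).isBounded.subset_Icc_sInf_sSup⟩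
  have hmeas_trace : ∀ (v : ℝ → ℝ → EuclideanSpace ℝ (Fin n)), Measurable (Function.uncurry v) →
      ∀ x, Measurable fun t => v t (Γ t + x) := fun v hv x =>
    hv.comp (measurable_id.prodMk (hΓ.measurable.add_const x))
  refine tendsto_zero_of_le_add_of_setLIntegral_le (c := 2 * ENNReal.ofReal K) (by finiteness)
    hx₀
    (hconv (Icc 0 T ×ˢ Icc m (M + x₀)) (isCompact_Icc.prod isCompact_Icc))
    (G := fun ν x => ∫⁻ t in Icc 0 T, edist (uν ν t (Γ t + x)) (u t (Γ t + x))) ?_ ?_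
  · intro ν x hx
    calc _ ≤ _ := lintegral_edist_le_add_add
          ((hmeas_trace _ (hmeasν ν) x).edist (hmeas_trace _ hmeas x)).aemeasurable
          ((hmeas_trace _ hmeas x).edist
            (hmeas.comp (measurable_id.prodMk hΓ.measurable))).aemeasurable
      _ ≤ ENNReal.ofReal (K * x) + _ + ENNReal.ofReal (K * x) := by
          gcongr
          exacts [htraceν ν x hx, htrace x hx]
      _ = _ := by
          rw [ENNReal.ofReal_mul' hx.1.le]
          ring
  · intro ν δ hδ
    exact (lintegral_Ioc_setLIntegral_shift_le (F := fun p => edist (uν ν p.1 p.2) (u p.1 p.2))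
      ((hmeasν ν).edist hmeas) hΓ.measurable hΓIcc δ).trans
      (lintegral_mono_set (prod_mono_right (Icc_subset_Icc_right (by linarith [hδ.2]))))

/-- Lemma 4: from `L¹loc` convergence `u^ν → u` in the `(t,x)`-plane together with
uniform one-sided `L¹`-Lipschitz trace estimates along the curve `Γ`, the traces
along `Γ` converge in `L¹([0,T])`. -/
theorem stmt17 (n : ℕ) (T K : ℝ) (hT : 0 < T) (hK : 0 < K)
    (uν : ℕ → ℝ → ℝ → EuclideanSpace ℝ (Fin n))
    (u : ℝ → ℝ → EuclideanSpace ℝ (Fin n)) (Γ : ℝ → ℝ)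
    (hΓ : Continuous Γ)
    (hmeasν : ∀ ν, Measurable (Function.uncurry (uν ν)))
    (hmeas : Measurable (Function.uncurry u))
    (hconv : ∀ Kset : Set (ℝ × ℝ), IsCompact Kset →
      Tendsto (fun ν => ∫⁻ p in Kset, ‖uν ν p.1 p.2 - u p.1 p.2‖₊) atTop (nhds 0))
    (x₀ : ℝ) (hx₀ : 0 < x₀)
    (htraceν : ∀ ν, ∀ x ∈ Set.Ioc (0 : ℝ) x₀,
      (∫⁻ t in Set.Icc 0 T, ‖uν ν t (Γ t) - uν ν t (Γ t + x)‖₊) ≤ ENNReal.ofReal (K * x))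
    (htrace : ∀ x ∈ Set.Ioc (0 : ℝ) x₀,
      (∫⁻ t in Set.Icc 0 T, ‖u t (Γ t + x) - u t (Γ t)‖₊) ≤ ENNReal.ofReal (K * x)) :
    Tendsto (fun ν => ∫⁻ t in Set.Icc 0 T, ‖uν ν t (Γ t) - u t (Γ t)‖₊) atTop (nhds 0) :=
  stmt17_general n T K uν u Γ hΓ hmeasν hmeas hconv x₀ hx₀ htraceν htrace
end
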